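/- Let d ≥ 5 and let Ĝ₀(ξ) = 1/(2d - 2Σ_{j=1}^d cos 2πξ_j) on 𝕋^d. For any multi-index exponent β with |β|₁ < d-2 and any p ≥ 1 satisfying p(2 + |β|₁) < d, the (possibly fractional) derivative ∂^β Ĝ₀ belongs to L^p(𝕋^d). -/

import Mathlib

open MeasureTheory

/-- The Fourier symbol `Ĝ₀(ξ) = 1 / (2d - 2 Σ_j cos 2πξ_j)` of `(-Δ)⁻¹` on `ℤ^d`. -/
noncomputable def G0hat (d : ℕ) (ξ : Fin d → ℝ) : ℝ :=
  1 / (2 * d - 2 * ∑ j, Real.cos (2 * Real.pi * ξ j))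

/-- Partial derivative in the `i`-th coordinate direction. -/
noncomputable def pderiv' {d : ℕ} (i : Fin d) (f : (Fin d → ℝ) → ℝ) : (Fin d → ℝ) → ℝ :=
  fun x => fderiv ℝ f x (Pi.single i 1)

/-- Iterated partial derivative `∂^β` for a multi-index `β : Fin d → ℕ`. -/
noncomputable def pderivMulti {d : ℕ} (β : Fin d → ℕ) (f : (Fin d → ℝ) → ℝ) :
    (Fin d → ℝ) → ℝ :=
  (List.finRange d).foldr (fun i g => (pderiv' i)^[β i] g) f

/-!
Off the lattice `ℤᵈ`, where `D = 2d - 2 Σⱼ cos 2πξⱼ` vanishes, every partial derivative of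
`Ĝ₀ = 1 / D` stays in the algebra generated by `Ĝ₀`, constants and `sin 2πξⱼ`, `cos 2πξⱼ`.
Grading this algebra by the order of the singularity gives `|∂^β Ĝ₀| ≲ D^(-(2 + |β|)/2)`.
As `D ≥ sin² πξⱼ` for every `j`, `D` dominates the geometric mean of these, so
`D^(-s) ≤ ∏ⱼ sin(πξⱼ)^(-2s/d)`, a product of functions of one variable that are integrable on
`(0, 1)` when `2s < d`.
-/

open Set Real Asymptotics Filter

section PartialDerivative

variable {d : ℕ}

lemma pderiv'_eq_of_hasFDerivAt {f : (Fin d → ℝ) → ℝ} {L : (Fin d → ℝ) →L[ℝ] ℝ}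
    {ξ : Fin d → ℝ} (h : HasFDerivAt f L ξ) (i : Fin d) : pderiv' i f ξ = L (Pi.single i 1) := by
  rw [pderiv', h.fderiv]

lemma pderiv'_add {f g : (Fin d → ℝ) → ℝ} {ξ : Fin d → ℝ} (hf : DifferentiableAt ℝ f ξ)
    (hg : DifferentiableAt ℝ g ξ) (i : Fin d) :
    pderiv' i (f + g) ξ = pderiv' i f ξ + pderiv' i g ξ := by
  simp only [pderiv', fderiv_add hf hg, add_apply]

lemma pderiv'_mul {f g : (Fin d → ℝ) → ℝ} {ξ : Fin d → ℝ} (hf : DifferentiableAt ℝ f ξ)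
    (hg : DifferentiableAt ℝ g ξ) (i : Fin d) :
    pderiv' i (f * g) ξ = pderiv' i f ξ * g ξ + f ξ * pderiv' i g ξ := by
  simp only [pderiv', fderiv_mul hf hg, add_apply, smul_apply, smul_eq_mul]
  ring

lemma pderiv'_congr {f g : (Fin d → ℝ) → ℝ} {ξ : Fin d → ℝ} (h : f =ᶠ[nhds ξ] g) (i : Fin d) :
    pderiv' i f ξ = pderiv' i g ξ := by
  rw [pderiv', pderiv', h.fderiv_eq]

lemma hasFDerivAt_sin_two_pi_mul_apply (j : Fin d) (ξ : Fin d → ℝ) :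
    HasFDerivAt (fun ξ : Fin d → ℝ => sin (2 * π * ξ j))
      (cos (2 * π * ξ j) • (2 * π) • (ContinuousLinearMap.proj j : (Fin d → ℝ) →L[ℝ] ℝ)) ξ :=
  ((hasFDerivAt_apply (𝕜 := ℝ) (F' := fun _ : Fin d => ℝ) j ξ).const_mul (2 * π)).sin

lemma hasFDerivAt_cos_two_pi_mul_apply (j : Fin d) (ξ : Fin d → ℝ) :
    HasFDerivAt (fun ξ : Fin d → ℝ => cos (2 * π * ξ j))
      (-sin (2 * π * ξ j) • (2 * π) • (ContinuousLinearMap.proj j : (Fin d → ℝ) →L[ℝ] ℝ)) ξ :=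
  ((hasFDerivAt_apply (𝕜 := ℝ) (F' := fun _ : Fin d => ℝ) j ξ).const_mul (2 * π)).cos

end PartialDerivative

noncomputable def laplacianSymbol (d : ℕ) (ξ : Fin d → ℝ) : ℝ :=
  2 * d - 2 * ∑ j, cos (2 * π * ξ j)

section LaplacianSymbol

variable {d : ℕ}

lemma laplacianSymbol_eq_sum_sin_sq (ξ : Fin d → ℝ) :
    laplacianSymbol d ξ = 4 * ∑ j, sin (π * ξ j) ^ 2 := by
  have hcos (j : Fin d) : cos (2 * π * ξ j) = 1 - 2 * sin (π * ξ j) ^ 2 := by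
    rw [mul_assoc, cos_two_mul_eq_one_sub]
  simp only [laplacianSymbol, hcos, Finset.sum_sub_distrib, ← Finset.mul_sum, Finset.sum_const,
    Finset.card_univ, Fintype.card_fin, nsmul_eq_mul, mul_one]
  ring

lemma four_mul_sin_sq_le_laplacianSymbol (ξ : Fin d → ℝ) (j : Fin d) :
    4 * sin (π * ξ j) ^ 2 ≤ laplacianSymbol d ξ := by
  rw [laplacianSymbol_eq_sum_sin_sq]
  gcongr
  exact Finset.single_le_sum (fun k _ => sq_nonneg (sin (π * ξ k))) (Finset.mem_univ j)

lemma laplacianSymbol_nonneg (ξ : Fin d → ℝ) : 0 ≤ laplacianSymbol d ξ := by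
  rw [laplacianSymbol_eq_sum_sin_sq]
  positivity

lemma laplacianSymbol_le (ξ : Fin d → ℝ) : laplacianSymbol d ξ ≤ 4 * d := by
  rw [laplacianSymbol_eq_sum_sin_sq]
  have : ∑ j, sin (π * ξ j) ^ 2 ≤ ∑ _j : Fin d, (1 : ℝ) :=
    Finset.sum_le_sum fun j _ => sin_sq_le_one _
  simp only [Finset.sum_const, Finset.card_univ, Fintype.card_fin, nsmul_eq_mul, mul_one] at this
  linarith

lemma sin_two_pi_sq_le_laplacianSymbol (ξ : Fin d → ℝ) (j : Fin d) :
    sin (2 * π * ξ j) ^ 2 ≤ laplacianSymbol d ξ := by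
  have hsin : sin (2 * π * ξ j) ^ 2 = 4 * sin (π * ξ j) ^ 2 * cos (π * ξ j) ^ 2 := by
    rw [mul_assoc, sin_two_mul]; ring
  rw [hsin]
  calc 4 * sin (π * ξ j) ^ 2 * cos (π * ξ j) ^ 2 ≤ 4 * sin (π * ξ j) ^ 2 :=
        mul_le_of_le_one_right (by positivity) (cos_sq_le_one _)
    _ ≤ laplacianSymbol d ξ := four_mul_sin_sq_le_laplacianSymbol ξ j

lemma laplacianSymbol_pos {ξ : Fin d → ℝ} (hd : 0 < d) (hξ : ξ ∈ univ.pi fun _ => Ioo 0 1) :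
    0 < laplacianSymbol d ξ := by
  obtain ⟨h0, h1⟩ := mem_univ_pi.mp hξ ⟨0, hd⟩
  have hsin : 0 < sin (π * ξ ⟨0, hd⟩) :=
    sin_pos_of_pos_of_lt_pi (by positivity) (by nlinarith [pi_pos])
  exact (by positivity : 0 < 4 * sin (π * ξ ⟨0, hd⟩) ^ 2).trans_le
    (four_mul_sin_sq_le_laplacianSymbol ξ _)

lemma continuous_laplacianSymbol : Continuous (laplacianSymbol d) := by
  unfold laplacianSymbol; fun_prop

lemma isOpen_laplacianSymbol_ne_zero : IsOpen {ξ | laplacianSymbol d ξ ≠ 0} :=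
  isOpen_ne_fun continuous_laplacianSymbol continuous_const

lemma hasFDerivAt_laplacianSymbol (ξ : Fin d → ℝ) :
    HasFDerivAt (laplacianSymbol d)
      (∑ j, (4 * π * sin (2 * π * ξ j)) •
        (ContinuousLinearMap.proj j : (Fin d → ℝ) →L[ℝ] ℝ)) ξ := by
  refine ((hasFDerivAt_const (2 * (d : ℝ)) ξ).sub ((HasFDerivAt.fun_sum (u := Finset.univ)
    fun j _ => hasFDerivAt_cos_two_pi_mul_apply j ξ).const_mul 2)).congr_fderiv ?_
  ext k
  simp only [zero_sub, neg_apply, smul_apply, sum_apply, ContinuousLinearMap.proj_apply,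
    smul_eq_mul, neg_mul, Finset.sum_neg_distrib, mul_neg, neg_neg]
  rw [Finset.mul_sum]
  exact Finset.sum_congr rfl fun i _ => by ring

lemma laplacianSymbol_rpow_isBigO {a b : ℝ} (hba : b ≤ a) :
    (fun ξ => laplacianSymbol d ξ ^ a) =O[𝓟 {ξ | laplacianSymbol d ξ ≠ 0}]
      fun ξ => laplacianSymbol d ξ ^ b := by
  refine IsBigO.of_bound ((4 * d) ^ (a - b)) (eventually_principal.2 fun ξ hξ => ?_)
  have hpos := (laplacianSymbol_nonneg ξ).lt_of_ne' hξ
  rw [norm_of_nonneg (rpow_nonneg hpos.le _), norm_of_nonneg (rpow_nonneg hpos.le _),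
    show a = (a - b) + b by ring, rpow_add hpos, add_sub_cancel_right]
  gcongr
  exact laplacianSymbol_le ξ

lemma G0hat_eq_inv : G0hat d = fun ξ => (laplacianSymbol d ξ)⁻¹ := by
  funext ξ
  rw [G0hat, one_div]
  rfl

lemma pderiv'_G0hat {ξ : Fin d → ℝ} (hξ : laplacianSymbol d ξ ≠ 0) (i : Fin d) :
    pderiv' i (G0hat d) ξ = -(4 * π) * sin (2 * π * ξ i) * G0hat d ξ * G0hat d ξ := by
  have hG : HasFDerivAt (G0hat d)
      (-(laplacianSymbol d ξ ^ 2)⁻¹ • ∑ j, (4 * π * sin (2 * π * ξ j)) •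
        (ContinuousLinearMap.proj j : (Fin d → ℝ) →L[ℝ] ℝ)) ξ := by
    rw [G0hat_eq_inv]
    exact (hasDerivAt_inv hξ).comp_hasFDerivAt ξ (hasFDerivAt_laplacianSymbol ξ)
  rw [pderiv'_eq_of_hasFDerivAt hG, G0hat_eq_inv]
  simp only [smul_apply, sum_apply, ContinuousLinearMap.proj_apply, Pi.single_apply, smul_eq_mul,
    mul_ite, mul_one, mul_zero, Finset.sum_ite_eq', Finset.mem_univ, ↓reduceIte]
  ring

end LaplacianSymbol


/-- `w` is the order of the singularity on `ℤᵈ`, the zero set of `D = laplacianSymbol d`: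
`|f| ≲ D^(-w/2) ≈ ‖ξ‖^(-w)`. As `sin 2πξⱼ` vanishes on `ℤᵈ` it has order `-1`, which makes
`∂ᵢ Ĝ₀ = -4π sin(2πξᵢ) Ĝ₀²` of order `3` rather than `4`. -/
inductive IsSingularSymbol (d : ℕ) : ℤ → ((Fin d → ℝ) → ℝ) → Prop
  | const (c : ℝ) : IsSingularSymbol d 0 fun _ => c
  | sin (j : Fin d) : IsSingularSymbol d (-1) fun ξ => sin (2 * π * ξ j)
  | cos (j : Fin d) : IsSingularSymbol d 0 fun ξ => cos (2 * π * ξ j)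
  | green : IsSingularSymbol d 2 (G0hat d)
  | add {w : ℤ} {f g : (Fin d → ℝ) → ℝ} :
      IsSingularSymbol d w f → IsSingularSymbol d w g → IsSingularSymbol d w (f + g)
  | mul {v w : ℤ} {f g : (Fin d → ℝ) → ℝ} :
      IsSingularSymbol d v f → IsSingularSymbol d w g → IsSingularSymbol d (v + w) (f * g)
  | mono {v w : ℤ} {f : (Fin d → ℝ) → ℝ} : IsSingularSymbol d v f → v ≤ w → IsSingularSymbol d w f
  | congr {w : ℤ} {f g : (Fin d → ℝ) → ℝ} :
      IsSingularSymbol d w g → EqOn f g {ξ | laplacianSymbol d ξ ≠ 0} → IsSingularSymbol d w f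

namespace IsSingularSymbol

variable {d : ℕ} {w : ℤ} {f : (Fin d → ℝ) → ℝ}

theorem differentiableAt (hf : IsSingularSymbol d w f) {ξ : Fin d → ℝ}
    (hξ : laplacianSymbol d ξ ≠ 0) : DifferentiableAt ℝ f ξ := by
  induction hf with
  | const c => exact differentiableAt_const c
  | sin j => exact (hasFDerivAt_sin_two_pi_mul_apply j ξ).differentiableAt
  | cos j => exact (hasFDerivAt_cos_two_pi_mul_apply j ξ).differentiableAt
  | green =>
    rw [G0hat_eq_inv]
    exact (hasFDerivAt_laplacianSymbol ξ).differentiableAt.inv hξ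
  | add _ _ hf hg => exact hf.add hg
  | mul _ _ hf hg => exact hf.mul hg
  | mono _ _ hf => exact hf
  | congr _ hfg hg =>
    exact hg.congr_of_eventuallyEq
      (hfg.eventuallyEq_of_mem (isOpen_laplacianSymbol_ne_zero.mem_nhds hξ))

theorem continuousOn (hf : IsSingularSymbol d w f) :
    ContinuousOn f {ξ | laplacianSymbol d ξ ≠ 0} :=
  fun _ hξ => (hf.differentiableAt hξ).continuousAt.continuousWithinAt

theorem pderiv (hf : IsSingularSymbol d w f) (i : Fin d) :
    IsSingularSymbol d (w + 1) (pderiv' i f) := by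
  induction hf with
  | const c =>
    refine ((const 0).mono zero_le_one).congr fun ξ _ => ?_
    simp [pderiv']
  | sin j =>
    refine (((const (2 * π * (Pi.single i 1 : Fin d → ℝ) j)).mul (cos j)).mono
      (by norm_num)).congr fun ξ _ => ?_
    rw [pderiv'_eq_of_hasFDerivAt (hasFDerivAt_sin_two_pi_mul_apply j ξ)]
    simp only [smul_apply, ContinuousLinearMap.proj_apply, smul_eq_mul, Pi.mul_apply]
    ring
  | cos j =>
    refine (((const (-(2 * π * (Pi.single i 1 : Fin d → ℝ) j))).mul (sin j)).mono
      (by norm_num)).congr fun ξ _ => ?_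
    rw [pderiv'_eq_of_hasFDerivAt (hasFDerivAt_cos_two_pi_mul_apply j ξ)]
    simp only [smul_apply, ContinuousLinearMap.proj_apply, smul_eq_mul, Pi.mul_apply]
    ring
  | green =>
    exact ((((const (-(4 * π))).mul (sin i)).mul green).mul green).mono (by norm_num) |>.congr
      fun ξ hξ => pderiv'_G0hat hξ i
  | add hf hg ihf ihg =>
    exact (ihf.add ihg).congr fun ξ hξ =>
      pderiv'_add (hf.differentiableAt hξ) (hg.differentiableAt hξ) i
  | mul hf hg ihf ihg =>
    exact ((ihf.mul hg).mono (by omega)).add ((hf.mul ihg).mono (by omega)) |>.congr fun ξ hξ =>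
      pderiv'_mul (hf.differentiableAt hξ) (hg.differentiableAt hξ) i
  | mono _ hvw ih => exact ih.mono (by omega)
  | congr _ hfg ih =>
    exact ih.congr fun ξ hξ =>
      pderiv'_congr (hfg.eventuallyEq_of_mem (isOpen_laplacianSymbol_ne_zero.mem_nhds hξ)) i

theorem isBigO (hf : IsSingularSymbol d w f) :
    f =O[𝓟 {ξ | laplacianSymbol d ξ ≠ 0}] fun ξ => laplacianSymbol d ξ ^ (-(w : ℝ) / 2) := by
  induction hf with
  | const c =>
    refine IsBigO.of_bound |c| (eventually_principal.2 fun ξ _ => ?_)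
    simp
  | sin j =>
    refine IsBigO.of_bound 1 (eventually_principal.2 fun ξ _ => ?_)
    rw [one_mul, norm_of_nonneg (rpow_nonneg (laplacianSymbol_nonneg ξ) _), norm_eq_abs,
      show -((-1 : ℤ) : ℝ) / 2 = 1 / 2 by norm_num, ← sqrt_eq_rpow]
    exact abs_le_sqrt (sin_two_pi_sq_le_laplacianSymbol ξ j)
  | cos j =>
    refine IsBigO.of_bound 1 (eventually_principal.2 fun ξ _ => ?_)
    simpa using abs_cos_le_one _
  | green =>
    refine IsBigO.of_bound 1 (eventually_principal.2 fun ξ _ => ?_)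
    rw [G0hat_eq_inv]
    norm_num [rpow_neg_one]
  | add _ _ hf hg => exact hf.add hg
  | mul _ _ hf hg =>
    refine (hf.mul hg).trans_eventuallyEq (eventually_principal.2 fun ξ hξ => ?_)
    dsimp only
    rw [← rpow_add ((laplacianSymbol_nonneg ξ).lt_of_ne' hξ)]
    congr 1
    push_cast
    ring
  | mono _ hvw hf =>
    exact hf.trans (laplacianSymbol_rpow_isBigO (by gcongr))
  | congr _ hfg hg => exact hg.congr' (eventually_principal.2 fun ξ hξ => (hfg hξ).symm) .rfl

theorem pderiv_iterate (hf : IsSingularSymbol d w f) (i : Fin d) (n : ℕ) :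
    IsSingularSymbol d (w + n) ((pderiv' i)^[n] f) := by
  induction n with
  | zero => simpa using hf
  | succ n ih =>
    rw [Function.iterate_succ_apply', Nat.cast_succ, ← add_assoc]
    exact ih.pderiv i

theorem pderivMulti (hf : IsSingularSymbol d w f) (β : Fin d → ℕ) :
    IsSingularSymbol d (w + (∑ i, β i : ℕ)) (pderivMulti β f) := by
  suffices ∀ l : List (Fin d), IsSingularSymbol d (w + ((l.map β).sum : ℕ))
      (l.foldr (fun i g => (pderiv' i)^[β i] g) f) by
    rw [Fin.sum_univ_def]
    exact this _
  intro l
  induction l with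
  | nil => simpa using hf
  | cons i l ih =>
    rw [List.foldr_cons, List.map_cons, List.sum_cons, Nat.cast_add, add_comm (β i : ℤ),
      ← add_assoc]
    exact ih.pderiv_iterate i (β i)

end IsSingularSymbol

lemma two_mul_le_sin_pi_mul {x : ℝ} (h0 : 0 ≤ x) (h1 : x ≤ 1 / 2) : 2 * x ≤ sin (π * x) := by
  have h := mul_le_sin (x := π * x) (by positivity) (by nlinarith [pi_pos])
  rwa [← mul_assoc, div_mul_cancel₀ 2 pi_ne_zero] at h

lemma sin_pi_mul_rpow_neg_le {x a : ℝ} (hx : x ∈ Ioo 0 1) (ha : 0 ≤ a) :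
    sin (π * x) ^ (-a) ≤ x ^ (-a) + (1 - x) ^ (-a) := by
  obtain ⟨hx0, hx1⟩ := hx
  rcases le_or_gt x (1 / 2) with hx2 | hx2
  · have : x ≤ sin (π * x) := by linarith [two_mul_le_sin_pi_mul hx0.le hx2]
    calc sin (π * x) ^ (-a) ≤ x ^ (-a) := rpow_le_rpow_of_nonpos hx0 this (by linarith)
      _ ≤ x ^ (-a) + (1 - x) ^ (-a) := le_add_of_nonneg_right (by positivity)
  · have : 1 - x ≤ sin (π * x) := by
      have := two_mul_le_sin_pi_mul (x := 1 - x) (by linarith) (by linarith)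
      rw [show π * (1 - x) = π - π * x by ring, sin_pi_sub] at this
      linarith
    calc sin (π * x) ^ (-a) ≤ (1 - x) ^ (-a) :=
          rpow_le_rpow_of_nonpos (by linarith) this (by linarith)
      _ ≤ x ^ (-a) + (1 - x) ^ (-a) := le_add_of_nonneg_left (by positivity)

lemma integrableOn_sin_pi_mul_rpow_neg {a : ℝ} (ha0 : 0 ≤ a) (ha1 : a < 1) :
    IntegrableOn (fun x => sin (π * x) ^ (-a)) (Ioo 0 1) := by
  have hr : -1 < -a := by linarith
  have hleft : IntegrableOn (fun x : ℝ => x ^ (-a)) (Ioo 0 1) :=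
    (intervalIntegral.integrableOn_Ioo_rpow_iff one_pos).2 hr
  have hright : IntegrableOn (fun x : ℝ => (1 - x) ^ (-a)) (Ioo 0 1) := by
    rw [← intervalIntegrable_iff_integrableOn_Ioo_of_le zero_le_one]
    simpa using (intervalIntegral.intervalIntegrable_rpow' hr (a := 1) (b := 0)).comp_sub_left 1
  refine (hleft.add hright).mono'
    ((by fun_prop : Measurable fun x => sin (π * x) ^ (-a)).aestronglyMeasurable)
    ((ae_restrict_mem measurableSet_Ioo).mono fun x hx => ?_)
  rw [norm_of_nonneg (rpow_nonneg (sin_pos_of_pos_of_lt_pi (by nlinarith [pi_pos, hx.1])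
    (by nlinarith [pi_pos, hx.2])).le _)]
  exact sin_pi_mul_rpow_neg_le hx ha0

lemma integrableOn_prod_sin_pi_mul_rpow_neg {d : ℕ} {a : ℝ} (ha0 : 0 ≤ a) (ha1 : a < 1) :
    IntegrableOn (fun ξ : Fin d → ℝ => ∏ j, sin (π * ξ j) ^ (-a)) (univ.pi fun _ => Ioo 0 1) := by
  rw [IntegrableOn, volume_pi, Measure.restrict_pi_pi]
  exact Integrable.fintype_prod fun _ => integrableOn_sin_pi_mul_rpow_neg ha0 ha1

lemma laplacianSymbol_rpow_neg_le_prod {d : ℕ} (hd : 0 < d) {s : ℝ} (hs : 0 ≤ s)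
    {ξ : Fin d → ℝ} (hξ : ξ ∈ univ.pi fun _ => Ioo 0 1) :
    laplacianSymbol d ξ ^ (-s) ≤ ∏ j, sin (π * ξ j) ^ (-(2 * s / d)) := by
  have hsin (j : Fin d) : 0 < sin (π * ξ j) := by
    obtain ⟨h0, h1⟩ := mem_univ_pi.mp hξ j
    exact sin_pos_of_pos_of_lt_pi (by positivity) (by nlinarith [pi_pos])
  have hprod : ∏ j, sin (π * ξ j) ^ 2 ≤ laplacianSymbol d ξ ^ (d : ℝ) := by
    calc ∏ j, sin (π * ξ j) ^ 2 ≤ ∏ _j : Fin d, laplacianSymbol d ξ :=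
          Finset.prod_le_prod (fun j _ => by positivity) fun j _ => by
            nlinarith [four_mul_sin_sq_le_laplacianSymbol ξ j, sq_nonneg (sin (π * ξ j))]
      _ = laplacianSymbol d ξ ^ (d : ℝ) := by simp
  have hd' : (0 : ℝ) < d := by exact_mod_cast hd
  calc laplacianSymbol d ξ ^ (-s) = (laplacianSymbol d ξ ^ (d : ℝ)) ^ (-s / d) := by
        rw [← rpow_mul (laplacianSymbol_nonneg ξ)]
        field_simp
    _ ≤ (∏ j, sin (π * ξ j) ^ 2) ^ (-s / d) :=
        rpow_le_rpow_of_nonpos (Finset.prod_pos fun j _ => by positivity [hsin j]) hprod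
          (div_nonpos_of_nonpos_of_nonneg (by linarith) hd'.le)
    _ = ∏ j, sin (π * ξ j) ^ (-(2 * s / d)) := by
        rw [← finsetProd_rpow _ _ fun j _ => by positivity]
        refine Finset.prod_congr rfl fun j _ => ?_
        rw [← rpow_natCast, ← rpow_mul (hsin j).le]
        ring_nf

lemma integrableOn_laplacianSymbol_rpow_neg {d : ℕ} {s : ℝ} (hs : 0 ≤ s) (hsd : 2 * s < d) :
    IntegrableOn (fun ξ => laplacianSymbol d ξ ^ (-s)) (univ.pi fun _ => Ioo 0 1) := by
  have hd' : (0 : ℝ) < d := by linarith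
  have hd : 0 < d := by exact_mod_cast hd'
  refine (integrableOn_prod_sin_pi_mul_rpow_neg (by positivity) ((div_lt_one hd').2 hsd)).mono'
    (continuous_laplacianSymbol.measurable.pow_const _).aestronglyMeasurable
    ((ae_restrict_mem (MeasurableSet.univ_pi fun _ => measurableSet_Ioo)).mono fun ξ hξ => ?_)
  rw [norm_of_nonneg (rpow_nonneg (laplacianSymbol_nonneg ξ) _)]
  exact laplacianSymbol_rpow_neg_le_prod hd hs hξ

lemma memLp_ofReal_of_abs_rpow_le {α : Type*} [MeasurableSpace α] {μ : Measure α} {f g : α → ℝ}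
    {p : ℝ} (hp : 0 < p) (hf : AEStronglyMeasurable f μ) (hg : Integrable g μ)
    (hfg : ∀ᵐ x ∂μ, |f x| ^ p ≤ g x) : MemLp f (ENNReal.ofReal p) μ := by
  refine (integrable_norm_rpow_iff hf (by simpa using hp) ENNReal.ofReal_ne_top).1 ?_
  rw [ENNReal.toReal_ofReal hp.le]
  exact hg.mono' (hf.aemeasurable.norm.pow_const p).aestronglyMeasurable (hfg.mono fun x hx => by
    rwa [norm_of_nonneg (by positivity), norm_eq_abs])

theorem IsSingularSymbol.memLp {d : ℕ} {w : ℤ} {f : (Fin d → ℝ) → ℝ}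
    (hf : IsSingularSymbol d w f) (hw : 0 ≤ w) {p : ℝ} (hp : 0 < p) (hpw : p * w < d) :
    MemLp f (ENNReal.ofReal p) (volume.restrict (univ.pi fun _ => Ioo 0 1)) := by
  have hd : 0 < d := by
    have : (0 : ℝ) ≤ p * w := by positivity
    exact_mod_cast this.trans_lt hpw
  obtain ⟨C, hC, hCbound⟩ := hf.isBigO.exists_pos
  have hcube := MeasurableSet.univ_pi fun (_ : Fin d) => measurableSet_Ioo (a := (0 : ℝ)) (b := 1)
  have hne : (univ.pi fun _ => Ioo 0 1) ⊆ {ξ : Fin d → ℝ | laplacianSymbol d ξ ≠ 0} :=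
    fun _ hξ => (laplacianSymbol_pos hd hξ).ne'
  refine memLp_ofReal_of_abs_rpow_le hp ((hf.continuousOn.mono hne).aestronglyMeasurable hcube)
    ((integrableOn_laplacianSymbol_rpow_neg (s := w * p / 2) (by positivity)
      (by linarith)).const_mul (C ^ p))
    ((ae_restrict_mem hcube).mono fun ξ hξ => ?_)
  have hD := laplacianSymbol_nonneg ξ
  have hfξ : |f ξ| ≤ C * laplacianSymbol d ξ ^ (-(w : ℝ) / 2) := by
    simpa [norm_of_nonneg (rpow_nonneg hD _)] using
      eventually_principal.1 hCbound.bound ξ (hne hξ)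
  calc |f ξ| ^ p ≤ (C * laplacianSymbol d ξ ^ (-(w : ℝ) / 2)) ^ p :=
        rpow_le_rpow (abs_nonneg _) hfξ hp.le
    _ = C ^ p * laplacianSymbol d ξ ^ (-(w * p / 2)) := by
        rw [mul_rpow hC.le (rpow_nonneg hD _), ← rpow_mul hD]
        ring_nf

theorem stmt15_general (d : ℕ) (β : Fin d → ℕ)
    (p : ℝ) (hp : 1 ≤ p) (hpd : p * (2 + (∑ i, β i : ℕ)) < d) :
    MeasureTheory.MemLp (pderivMulti β (G0hat d)) (ENNReal.ofReal p)
      (volume.restrict (Set.Icc (0 : Fin d → ℝ) 1)) := by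
  have hcube : (univ.pi fun _ => Ioo 0 1) =ᵐ[volume] Icc (0 : Fin d → ℝ) 1 :=
    Measure.univ_pi_Ioo_ae_eq_Icc
  rw [← Measure.restrict_congr_set hcube]
  exact (IsSingularSymbol.green.pderivMulti β).memLp (by positivity) (by linarith)
    (by exact_mod_cast hpd)

theorem stmt15 (d : ℕ) (hd : 5 ≤ d) (β : Fin d → ℕ)
    (hβ : ((∑ i, β i : ℕ) : ℝ) < (d : ℝ) - 2)
    (p : ℝ) (hp : 1 ≤ p) (hpd : p * (2 + (∑ i, β i : ℕ)) < d) :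
    MeasureTheory.MemLp (pderivMulti β (G0hat d)) (ENNReal.ofReal p)
      (volume.restrict (Set.Icc (0 : Fin d → ℝ) 1)) :=
  stmt15_general d β p hp hpd
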